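/- arXiv:2306.06102 — 3 statements merged into one kernel-verified Lean document; each statement's English description precedes it below -/
import Mathlib

section
/- Under Assumptions 1 and 2, there exist positive real parameters δ, γ^1, …, γ^m, μ (with the open ball B_δ of radius δ about the origin contained in 𝕏 and 𝕏∖B_δ nonempty) such that, with K a matrix satisfying Assumption 2 for this δ, both of the following hold: (8) β := min_{x ∈ 𝕏∖B_δ} [1 − Σ_{i=1}^m γ^i ‖x‖ / max(μ, ‖x − p^i‖)] > 0, and (9) β·(L^0(x, Kx) + F^0(f(x, Kx)) − F^0(x)) ≤ −(1 − β)·P for all x ∈ 𝕏∖B_δ. -/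
/-!
On the compact set `𝕏 ∖ B_δ` the continuous closed-loop decrease
`v x = L⁰(x, Kx) + F⁰(f(x, Kx)) − F⁰(x)` is negative, so it is bounded by some `M < 0`.
Then `β v ≤ β M ≤ −(1 − β) P` as soon as `β ∈ [|P| / (|P| − M), 1]`, and since `𝕏` is bounded,
equal weights `γⁱ = ε` with `ε` small enough push the minimum `β` into that interval.
-/

noncomputable section

/-- A class-K function: continuous, strictly increasing on `[0,∞)`, vanishing at `0`. -/
def ClassK (σ : ℝ → ℝ) : Prop :=
  ContinuousOn σ (Set.Ici 0) ∧ StrictMonoOn σ (Set.Ici 0) ∧ σ 0 = 0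

/-- Application of a matrix `K ∈ ℝ^{n_u × n_x}` to a state vector. -/
def matVec {nu nx : ℕ} (K : Matrix (Fin nu) (Fin nx) ℝ) (x : EuclideanSpace ℝ (Fin nx)) :
    EuclideanSpace ℝ (Fin nu) :=
  WithLp.toLp 2 (fun j => ∑ i, K j i * x i)

open Metric

/-- The paper's `β` is the minimum of this weight over `𝕏 ∖ B_δ`. -/
def destinationWeight {ι E : Type*} [Fintype ι] [NormedAddCommGroup E]
    (γ : ι → ℝ) (μ : ℝ) (q : ι → E) (x : E) : ℝ :=
  1 - ∑ i, γ i * ‖x‖ / max μ ‖x - q i‖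

section destinationWeight

variable {ι E : Type*} [Fintype ι] [NormedAddCommGroup E] {μ : ℝ}

theorem continuous_destinationWeight (γ : ι → ℝ) (hμ : 0 < μ) (q : ι → E) :
    Continuous (destinationWeight γ μ q) := by
  refine continuous_const.sub (continuous_finsetSum _ fun i _ => ?_)
  exact (continuous_const.mul continuous_norm).div
    (continuous_const.max (continuous_id.sub continuous_const).norm)
    fun x => (hμ.trans_le (le_max_left _ _)).ne'

theorem destinationWeight_le_one {γ : ι → ℝ} (hγ : ∀ i, 0 ≤ γ i) (hμ : 0 < μ) (q : ι → E)
    (x : E) : destinationWeight γ μ q x ≤ 1 := by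
  have hsum : 0 ≤ ∑ i, γ i * ‖x‖ / max μ ‖x - q i‖ :=
    Finset.sum_nonneg fun i _ =>
      div_nonneg (mul_nonneg (hγ i) (norm_nonneg x)) (hμ.le.trans (le_max_left _ _))
  unfold destinationWeight
  linarith

theorem exists_pos_forall_lt_destinationWeight {S : Set E} (hS : Bornology.IsBounded S)
    {t : ℝ} (ht : t < 1) (hμ : 0 < μ) (q : ι → E) :
    ∃ ε > 0, ∀ x ∈ S, t < destinationWeight (fun _ => ε) μ q x := by
  obtain ⟨R, hR0, hR⟩ := hS.exists_pos_norm_le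
  set n : ℝ := (Fintype.card ι : ℝ)
  have h1t : 0 < 1 - t := sub_pos.2 ht
  have hden : 0 < n * R + 1 := by positivity
  set ε := (1 - t) * μ / (n * R + 1)
  have hε : 0 < ε := by positivity
  refine ⟨ε, hε, fun x hx => ?_⟩
  have hterm : ∀ i, ε * ‖x‖ / max μ ‖x - q i‖ ≤ ε * R / μ := fun i =>
    div_le_div₀ (by positivity) (mul_le_mul_of_nonneg_left (hR x hx) hε.le) hμ (le_max_left _ _)
  have hsum : ∑ i, ε * ‖x‖ / max μ ‖x - q i‖ ≤ n * (ε * R / μ) := by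
    simpa using Finset.sum_le_sum fun i (_ : i ∈ Finset.univ) => hterm i
  have hnε : n * (ε * R / μ) < 1 - t := by
    have : n * (ε * R / μ) = (1 - t) * (n * R / (n * R + 1)) := by
      simp only [ε]; field_simp
    rw [this]
    exact mul_lt_of_lt_one_right h1t ((div_lt_one hden).2 (lt_add_one _))
  unfold destinationWeight
  linarith

end destinationWeight

/-- The threshold is `|P| / (|P| − M)`: then `β M + (1 − β) P ≤ |P| − β (|P| − M) ≤ 0`. -/
theorem exists_forall_mul_add_one_sub_mul_nonpos {M : ℝ} (hM : M < 0) (P : ℝ) :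
    ∃ t, 0 ≤ t ∧ t < 1 ∧ ∀ β, t ≤ β → β ≤ 1 → β * M + (1 - β) * P ≤ 0 := by
  have hpos : 0 < |P| - M := by linarith [abs_nonneg P]
  refine ⟨|P| / (|P| - M), by positivity, (div_lt_one hpos).2 (by linarith), fun β hβ hβ1 => ?_⟩
  rw [div_le_iff₀ hpos] at hβ
  nlinarith [le_abs_self P]

theorem continuous_matVec {nu nx : ℕ} (K : Matrix (Fin nu) (Fin nx) ℝ) :
    Continuous (matVec K) := by
  unfold matVec
  fun_prop

theorem stmt_0_general {nx nu m : ℕ}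
    (f : EuclideanSpace ℝ (Fin nx) → EuclideanSpace ℝ (Fin nu) → EuclideanSpace ℝ (Fin nx))
    (hf : Continuous fun q : EuclideanSpace ℝ (Fin nx) × EuclideanSpace ℝ (Fin nu) =>
      f q.1 q.2)
    (Xs : Set (EuclideanSpace ℝ (Fin nx))) (hXc : IsCompact Xs)
    (p : Fin (m + 1) → EuclideanSpace ℝ (Fin nx))
    (L : Fin (m + 1) → EuclideanSpace ℝ (Fin nx) → EuclideanSpace ℝ (Fin nu) → ℝ)
    (F : Fin (m + 1) → EuclideanSpace ℝ (Fin nx) → ℝ)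
    -- Assumption 1
    (hLc : ∀ i, Continuous fun q :
      EuclideanSpace ℝ (Fin nx) × EuclideanSpace ℝ (Fin nu) => L i q.1 q.2)
    (hFc : ∀ i, Continuous (F i))
    -- Assumption 2
    (hA2 : ∀ δ > (0 : ℝ), Metric.ball (0 : EuclideanSpace ℝ (Fin nx)) δ ⊆ Xs →
      ∃ K : Matrix (Fin nu) (Fin nx) ℝ, ∀ x ∈ Xs \ Metric.ball 0 δ,
        L 0 x (matVec K x) + F 0 (f x (matVec K x)) - F 0 x < 0)
    -- there is some admissible radius (implicit in the paper's "pick any δ > 0 with B_δ ⊆ 𝕏")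
    (hδ0 : ∃ δ0 > (0 : ℝ), Metric.ball (0 : EuclideanSpace ℝ (Fin nx)) δ0 ⊆ Xs ∧
      (Xs \ Metric.ball 0 δ0).Nonempty)
    -- the constant P = min_{u∈𝕌} max_{i,x∈𝕏}[Lⁱ(x,u)+Fⁱ(f(x,u))−Fⁱ(x)]
    (P : ℝ) :
    ∃ δ : ℝ, 0 < δ ∧ Metric.ball (0 : EuclideanSpace ℝ (Fin nx)) δ ⊆ Xs ∧
      (Xs \ Metric.ball 0 δ).Nonempty ∧
    ∃ K : Matrix (Fin nu) (Fin nx) ℝ,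
      (∀ x ∈ Xs \ Metric.ball 0 δ,
        L 0 x (matVec K x) + F 0 (f x (matVec K x)) - F 0 x < 0) ∧
    ∃ γ : Fin m → ℝ, ∃ μ : ℝ, (∀ i, 0 < γ i) ∧ 0 < μ ∧
    ∃ β : ℝ,
      IsLeast ((fun x : EuclideanSpace ℝ (Fin nx) =>
        1 - ∑ i : Fin m, γ i * ‖x‖ / max μ ‖x - p i.succ‖) ''
          (Xs \ Metric.ball 0 δ)) β ∧
      0 < β ∧
      ∀ x ∈ Xs \ Metric.ball 0 δ,
        β * (L 0 x (matVec K x) + F 0 (f x (matVec K x)) - F 0 x) ≤ -(1 - β) * P := by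
  obtain ⟨δ, hδ, hball, hne⟩ := hδ0
  obtain ⟨K, hK⟩ := hA2 δ hδ hball
  have hS : IsCompact (Xs \ ball 0 δ) := hXc.diff isOpen_ball
  have hv : Continuous fun x => L 0 x (matVec K x) + F 0 (f x (matVec K x)) - F 0 x :=
    ((hLc 0).comp (continuous_id.prodMk (continuous_matVec K))).add
      ((hFc 0).comp (hf.comp (continuous_id.prodMk (continuous_matVec K)))) |>.sub (hFc 0)
  obtain ⟨xM, hxM, hvM⟩ := hS.exists_isMaxOn hne hv.continuousOn
  obtain ⟨t, ht0, ht1, ht⟩ := exists_forall_mul_add_one_sub_mul_nonpos (hK xM hxM) P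
  obtain ⟨ε, hε, htw⟩ := exists_pos_forall_lt_destinationWeight
    (hXc.isBounded.subset Set.sdiff_subset) ht1 one_pos fun i : Fin m => p i.succ
  set w := destinationWeight (fun _ : Fin m => ε) 1 fun i => p i.succ
  have hw : Continuous w := continuous_destinationWeight _ one_pos _
  obtain ⟨x0, hx0, hmin⟩ := hS.exists_isMinOn hne hw.continuousOn
  have hβt : t < w x0 := htw x0 hx0
  have hβ1 : w x0 ≤ 1 := destinationWeight_le_one (fun _ => hε.le) one_pos _ x0
  refine ⟨δ, hδ, hball, hne, K, hK, fun _ => ε, 1, fun _ => hε, one_pos, w x0,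
    ⟨⟨x0, hx0, rfl⟩, Set.forall_mem_image.2 fun x hx => hmin hx⟩, ht0.trans_lt hβt,
    fun x hx => ?_⟩
  have hβv := mul_le_mul_of_nonneg_left (hvM hx) (ht0.trans hβt.le)
  linarith [ht _ hβt.le hβ1]

/-- Lemma 1: under Assumptions 1 and 2, there exist positive parameters
`δ, γ^1,…,γ^m, μ` (with `B_δ ⊆ 𝕏` and `𝕏∖B_δ` nonempty) such that, with `K` a matrix
satisfying Assumption 2 for this `δ`, both
`β := min_{x∈𝕏∖B_δ} [1 − Σ_i γ^i‖x‖/max(μ,‖x−p^i‖)] > 0` and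
`β·(L⁰(x,Kx)+F⁰(f(x,Kx))−F⁰(x)) ≤ −(1−β)·P` for all `x ∈ 𝕏∖B_δ` hold.
Here `P` is the min-max constant of the paper, characterized by `hP`. -/
theorem stmt_0 {nx nu m : ℕ}
    (f : EuclideanSpace ℝ (Fin nx) → EuclideanSpace ℝ (Fin nu) → EuclideanSpace ℝ (Fin nx))
    (hf : Continuous fun q : EuclideanSpace ℝ (Fin nx) × EuclideanSpace ℝ (Fin nu) =>
      f q.1 q.2)
    (Xs : Set (EuclideanSpace ℝ (Fin nx))) (hXc : IsCompact Xs)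
    (Us : Set (EuclideanSpace ℝ (Fin nu))) (hUc : IsCompact Us)
    (p : Fin (m + 1) → EuclideanSpace ℝ (Fin nx)) (hp0 : p 0 = 0)
    (L : Fin (m + 1) → EuclideanSpace ℝ (Fin nx) → EuclideanSpace ℝ (Fin nu) → ℝ)
    (F : Fin (m + 1) → EuclideanSpace ℝ (Fin nx) → ℝ)
    -- Assumption 1
    (hLc : ∀ i, Continuous fun q :
      EuclideanSpace ℝ (Fin nx) × EuclideanSpace ℝ (Fin nu) => L i q.1 q.2)
    (hFc : ∀ i, Continuous (F i))
    (hLp : ∀ i, L i (p i) 0 = 0) (hFp : ∀ i, F i (p i) = 0)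
    (σ1 σ2 : ℝ → ℝ) (hσ1 : ClassK σ1) (hσ2 : ClassK σ2)
    (hL_lb : ∀ i, ∀ x ∈ Xs, ∀ u ∈ Us, σ1 ‖x - p i‖ ≤ L i x u)
    (hF_lb : ∀ i, ∀ x ∈ Xs, σ1 ‖x - p i‖ ≤ F i x)
    (hF_ub : ∀ i, ∀ x ∈ Xs, F i x ≤ σ2 ‖x - p i‖)
    -- Assumption 2
    (hA2 : ∀ δ > (0 : ℝ), Metric.ball (0 : EuclideanSpace ℝ (Fin nx)) δ ⊆ Xs →
      ∃ K : Matrix (Fin nu) (Fin nx) ℝ, ∀ x ∈ Xs \ Metric.ball 0 δ,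
        L 0 x (matVec K x) + F 0 (f x (matVec K x)) - F 0 x < 0)
    -- there is some admissible radius (implicit in the paper's "pick any δ > 0 with B_δ ⊆ 𝕏")
    (hδ0 : ∃ δ0 > (0 : ℝ), Metric.ball (0 : EuclideanSpace ℝ (Fin nx)) δ0 ⊆ Xs ∧
      (Xs \ Metric.ball 0 δ0).Nonempty)
    -- the constant P = min_{u∈𝕌} max_{i,x∈𝕏}[Lⁱ(x,u)+Fⁱ(f(x,u))−Fⁱ(x)]
    (P : ℝ)
    (hP : IsLeast {y : ℝ | ∃ u ∈ Us, IsGreatest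
        ((fun q : Fin (m + 1) × EuclideanSpace ℝ (Fin nx) =>
            L q.1 q.2 u + F q.1 (f q.2 u) - F q.1 q.2) ''
          ((Set.univ : Set (Fin (m + 1))) ×ˢ Xs)) y} P) :
    ∃ δ : ℝ, 0 < δ ∧ Metric.ball (0 : EuclideanSpace ℝ (Fin nx)) δ ⊆ Xs ∧
      (Xs \ Metric.ball 0 δ).Nonempty ∧
    ∃ K : Matrix (Fin nu) (Fin nx) ℝ,
      (∀ x ∈ Xs \ Metric.ball 0 δ,
        L 0 x (matVec K x) + F 0 (f x (matVec K x)) - F 0 x < 0) ∧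
    ∃ γ : Fin m → ℝ, ∃ μ : ℝ, (∀ i, 0 < γ i) ∧ 0 < μ ∧
    ∃ β : ℝ,
      IsLeast ((fun x : EuclideanSpace ℝ (Fin nx) =>
        1 - ∑ i : Fin m, γ i * ‖x‖ / max μ ‖x - p i.succ‖) ''
          (Xs \ Metric.ball 0 δ)) β ∧
      0 < β ∧
      ∀ x ∈ Xs \ Metric.ball 0 δ,
        β * (L 0 x (matVec K x) + F 0 (f x (matVec K x)) - F 0 x) ≤ -(1 - β) * P :=
  stmt_0_general f hf Xs hXc p L F hLc hFc hA2 hδ0 P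
end
end

section
/- Suppose P > 0. Fix δ > 0 with B_δ ⊆ 𝕏 and 𝕏∖B_δ nonempty, let K be a matrix satisfying Assumption 2 for this δ, and set k_1 := max_{x ∈ 𝕏∖B_δ} [L^0(x, Kx) + F^0(f(x, Kx)) − F^0(x)] (so k_1 < 0) and z := max_{x ∈ 𝕏∖B_δ} ‖x‖ (so z > 0). If the positive parameters γ^1, …, γ^m, μ satisfy (Σ_{i=1}^m γ^i)/μ ≤ (1 − P/(P − k_1))/z, then β := min_{x ∈ 𝕏∖B_δ} [1 − Σ_{i=1}^m γ^i ‖x‖ / max(μ, ‖x − p^i‖)] satisfies β ≥ P/(P − k_1) > 0, and β·(L^0(x, Kx) + F^0(f(x, Kx)) − F^0(x)) ≤ −(1 − β)·P for all x ∈ 𝕏∖B_δ. -/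
noncomputable section

/-! The minimum β of the continuous function `x ↦ 1 - Σ γⁱ‖x‖/max(μ, ‖x - pⁱ‖)` over the
compact set `𝕏 ∖ B_δ` exists. Each term is at most `γⁱ z / μ`, so the ratio condition gives
`β ≥ r := P/(P - k₁)`, i.e. `P ≤ β (P - k₁)`; together with `V(x) ≤ k₁ < 0` for
`V(x) := L⁰(x, Kx) + F⁰(f(x, Kx)) - F⁰(x)` this yields `β V(x) ≤ β k₁ ≤ -(1 - β) P`. -/

open Finset

theorem mul_div_self_le {a b : ℝ} (ha : 0 ≤ a) (hb : 0 ≤ b) : a * (b / a) ≤ b := by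
  rcases ha.eq_or_lt with rfl | ha
  · simpa using hb
  · rw [mul_div_cancel₀ _ ha.ne']

section

variable {ι E : Type*} [Fintype ι] [SeminormedAddCommGroup E]

theorem continuous_sum_mul_norm_div_max (γ : ι → ℝ) {μ : ℝ} (hμ : 0 < μ) (q : ι → E) :
    Continuous fun x : E => ∑ i, γ i * ‖x‖ / max μ ‖x - q i‖ :=
  continuous_finsetSum _ fun i _ =>
    (continuous_const.mul continuous_norm).div (continuous_const.max (by fun_prop))
      fun _ => (lt_max_of_lt_left hμ).ne'

theorem sum_mul_norm_div_max_le {γ : ι → ℝ} (hγ : ∀ i, 0 ≤ γ i) {μ z : ℝ} (hμ : 0 < μ)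
    (q : ι → E) {x : E} (hxz : ‖x‖ ≤ z) :
    ∑ i, γ i * ‖x‖ / max μ ‖x - q i‖ ≤ z * ((∑ i, γ i) / μ) := by
  rw [sum_div, mul_sum]
  gcongr with i
  calc γ i * ‖x‖ / max μ ‖x - q i‖ ≤ γ i * z / μ := by
        gcongr
        · exact mul_nonneg (hγ i) ((norm_nonneg x).trans hxz)
        · exact hγ i
        · exact le_max_left _ _
    _ = z * (γ i / μ) := by ring

theorem le_one_sub_sum_mul_norm_div_max {γ : ι → ℝ} (hγ : ∀ i, 0 ≤ γ i) {μ z r : ℝ}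
    (hμ : 0 < μ) (hr : r ≤ 1) (q : ι → E) {x : E} (hxz : ‖x‖ ≤ z)
    (hrat : (∑ i, γ i) / μ ≤ (1 - r) / z) :
    r ≤ 1 - ∑ i, γ i * ‖x‖ / max μ ‖x - q i‖ := by
  have hz : 0 ≤ z := (norm_nonneg x).trans hxz
  have := calc
    ∑ i, γ i * ‖x‖ / max μ ‖x - q i‖ ≤ z * ((∑ i, γ i) / μ) :=
      sum_mul_norm_div_max_le hγ hμ q hxz
    _ ≤ z * ((1 - r) / z) := mul_le_mul_of_nonneg_left hrat hz
    -- `z = 0` is allowed: then `(1 - r) / z = 0` and the left side vanishes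
    _ ≤ 1 - r := mul_div_self_le hz (sub_nonneg.2 hr)
  linarith

end

theorem mul_le_neg_one_sub_mul_of_div_sub_le {P k β v : ℝ} (hP : 0 < P) (hk : k < 0)
    (hβ : P / (P - k) ≤ β) (hv : v ≤ k) : β * v ≤ -(1 - β) * P := by
  have hPk : 0 < P - k := by linarith
  have hβpos : 0 < β := (div_pos hP hPk).trans_le hβ
  have hPβ : P ≤ β * (P - k) := (div_le_iff₀ hPk).mp hβ
  nlinarith [mul_le_mul_of_nonneg_left hv hβpos.le]

theorem stmt_1_general {nx nu m : ℕ}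
    (f : EuclideanSpace ℝ (Fin nx) → EuclideanSpace ℝ (Fin nu) → EuclideanSpace ℝ (Fin nx))
    (Xs : Set (EuclideanSpace ℝ (Fin nx))) (hXc : IsCompact Xs)
    (p : Fin (m + 1) → EuclideanSpace ℝ (Fin nx))
    (L : Fin (m + 1) → EuclideanSpace ℝ (Fin nx) → EuclideanSpace ℝ (Fin nu) → ℝ)
    (F : Fin (m + 1) → EuclideanSpace ℝ (Fin nx) → ℝ)
    -- the constant P = min_{u∈𝕌} max_{i,x∈𝕏}[Lⁱ(x,u)+Fⁱ(f(x,u))−Fⁱ(x)], with P > 0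
    (P : ℝ)
    (hPpos : 0 < P)
    -- δ and K
    (δ : ℝ)
    (hne : (Xs \ Metric.ball 0 δ).Nonempty)
    (K : Matrix (Fin nu) (Fin nx) ℝ)
    (hK : ∀ x ∈ Xs \ Metric.ball 0 δ,
      L 0 x (matVec K x) + F 0 (f x (matVec K x)) - F 0 x < 0)
    -- k₁ and z
    (k1 : ℝ)
    (hk1 : IsGreatest ((fun x : EuclideanSpace ℝ (Fin nx) =>
      L 0 x (matVec K x) + F 0 (f x (matVec K x)) - F 0 x) '' (Xs \ Metric.ball 0 δ)) k1)
    (z : ℝ)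
    (hz : IsGreatest ((fun x : EuclideanSpace ℝ (Fin nx) => ‖x‖) ''
      (Xs \ Metric.ball 0 δ)) z)
    -- the parameters
    (γ : Fin m → ℝ) (hγ : ∀ i, 0 < γ i) (μ : ℝ) (hμ : 0 < μ)
    (hrat : (∑ i, γ i) / μ ≤ (1 - P / (P - k1)) / z) :
    ∃ β : ℝ,
      IsLeast ((fun x : EuclideanSpace ℝ (Fin nx) =>
        1 - ∑ i : Fin m, γ i * ‖x‖ / max μ ‖x - p i.succ‖) ''
          (Xs \ Metric.ball 0 δ)) β ∧
      P / (P - k1) ≤ β ∧ 0 < P / (P - k1) ∧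
      ∀ x ∈ Xs \ Metric.ball 0 δ,
        β * (L 0 x (matVec K x) + F 0 (f x (matVec K x)) - F 0 x) ≤ -(1 - β) * P := by
  set D := Xs \ Metric.ball 0 δ
  have hDc : IsCompact D := hXc.diff Metric.isOpen_ball
  have hgc : Continuous fun x => 1 - ∑ i, γ i * ‖x‖ / max μ ‖x - p i.succ‖ :=
    continuous_const.sub (continuous_sum_mul_norm_div_max γ hμ _)
  obtain ⟨β, hβ⟩ := (hDc.image hgc).exists_isLeast (hne.image _)
  have hk1neg : k1 < 0 := by
    obtain ⟨x, hx, rfl⟩ := hk1.1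
    exact hK x hx
  have hr1 : P / (P - k1) ≤ 1 := div_le_one_of_le₀ (by linarith) (by linarith)
  have hrβ : P / (P - k1) ≤ β := by
    obtain ⟨x, hx, rfl⟩ := hβ.1
    exact le_one_sub_sum_mul_norm_div_max (fun i => (hγ i).le) hμ hr1 _ (hz.2 ⟨x, hx, rfl⟩) hrat
  exact ⟨β, hβ, hrβ, div_pos hPpos (by linarith), fun x hx =>
    mul_le_neg_one_sub_mul_of_div_sub_le hPpos hk1neg hrβ (hk1.2 ⟨x, hx, rfl⟩)⟩

/-- suppose `P > 0`, fix `δ > 0` with `B_δ ⊆ 𝕏` and `𝕏∖B_δ` nonempty, let `K`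
satisfy Assumption 2 for `δ`, and set `k_1 := max_{x∈𝕏∖B_δ}[L⁰(x,Kx)+F⁰(f(x,Kx))−F⁰(x)]`
and `z := max_{x∈𝕏∖B_δ} ‖x‖`.  If the positive `γ^i, μ` satisfy
`(Σ γ^i)/μ ≤ (1 − P/(P−k_1))/z`, then
`β := min_{x∈𝕏∖B_δ}[1 − Σ_i γ^i‖x‖/max(μ,‖x−p^i‖)]` satisfies `β ≥ P/(P−k_1) > 0` and
`β·(L⁰(x,Kx)+F⁰(f(x,Kx))−F⁰(x)) ≤ −(1−β)·P` for all `x ∈ 𝕏∖B_δ`. -/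
theorem stmt_1 {nx nu m : ℕ}
    (f : EuclideanSpace ℝ (Fin nx) → EuclideanSpace ℝ (Fin nu) → EuclideanSpace ℝ (Fin nx))
    (hf : Continuous fun q : EuclideanSpace ℝ (Fin nx) × EuclideanSpace ℝ (Fin nu) =>
      f q.1 q.2)
    (Xs : Set (EuclideanSpace ℝ (Fin nx))) (hXc : IsCompact Xs)
    (Us : Set (EuclideanSpace ℝ (Fin nu))) (hUc : IsCompact Us)
    (p : Fin (m + 1) → EuclideanSpace ℝ (Fin nx)) (hp0 : p 0 = 0)
    (L : Fin (m + 1) → EuclideanSpace ℝ (Fin nx) → EuclideanSpace ℝ (Fin nu) → ℝ)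
    (F : Fin (m + 1) → EuclideanSpace ℝ (Fin nx) → ℝ)
    -- Assumption 1
    (hLc : ∀ i, Continuous fun q :
      EuclideanSpace ℝ (Fin nx) × EuclideanSpace ℝ (Fin nu) => L i q.1 q.2)
    (hFc : ∀ i, Continuous (F i))
    (hLp : ∀ i, L i (p i) 0 = 0) (hFp : ∀ i, F i (p i) = 0)
    (σ1 σ2 : ℝ → ℝ) (hσ1 : ClassK σ1) (hσ2 : ClassK σ2)
    (hL_lb : ∀ i, ∀ x ∈ Xs, ∀ u ∈ Us, σ1 ‖x - p i‖ ≤ L i x u)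
    (hF_lb : ∀ i, ∀ x ∈ Xs, σ1 ‖x - p i‖ ≤ F i x)
    (hF_ub : ∀ i, ∀ x ∈ Xs, F i x ≤ σ2 ‖x - p i‖)
    -- the constant P = min_{u∈𝕌} max_{i,x∈𝕏}[Lⁱ(x,u)+Fⁱ(f(x,u))−Fⁱ(x)], with P > 0
    (P : ℝ)
    (hP : IsLeast {y : ℝ | ∃ u ∈ Us, IsGreatest
        ((fun q : Fin (m + 1) × EuclideanSpace ℝ (Fin nx) =>
            L q.1 q.2 u + F q.1 (f q.2 u) - F q.1 q.2) ''
          ((Set.univ : Set (Fin (m + 1))) ×ˢ Xs)) y} P)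
    (hPpos : 0 < P)
    -- δ and K
    (δ : ℝ) (hδ : 0 < δ)
    (hball : Metric.ball (0 : EuclideanSpace ℝ (Fin nx)) δ ⊆ Xs)
    (hne : (Xs \ Metric.ball 0 δ).Nonempty)
    (K : Matrix (Fin nu) (Fin nx) ℝ)
    (hK : ∀ x ∈ Xs \ Metric.ball 0 δ,
      L 0 x (matVec K x) + F 0 (f x (matVec K x)) - F 0 x < 0)
    -- k₁ and z
    (k1 : ℝ)
    (hk1 : IsGreatest ((fun x : EuclideanSpace ℝ (Fin nx) =>
      L 0 x (matVec K x) + F 0 (f x (matVec K x)) - F 0 x) '' (Xs \ Metric.ball 0 δ)) k1)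
    (z : ℝ)
    (hz : IsGreatest ((fun x : EuclideanSpace ℝ (Fin nx) => ‖x‖) ''
      (Xs \ Metric.ball 0 δ)) z)
    -- the parameters
    (γ : Fin m → ℝ) (hγ : ∀ i, 0 < γ i) (μ : ℝ) (hμ : 0 < μ)
    (hrat : (∑ i, γ i) / μ ≤ (1 - P / (P - k1)) / z) :
    ∃ β : ℝ,
      IsLeast ((fun x : EuclideanSpace ℝ (Fin nx) =>
        1 - ∑ i : Fin m, γ i * ‖x‖ / max μ ‖x - p i.succ‖) ''
          (Xs \ Metric.ball 0 δ)) β ∧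
      P / (P - k1) ≤ β ∧ 0 < P / (P - k1) ∧
      ∀ x ∈ Xs \ Metric.ball 0 δ,
        β * (L 0 x (matVec K x) + F 0 (f x (matVec K x)) - F 0 x) ≤ -(1 - β) * P :=
  stmt_1_general f Xs hXc p L F P hPpos δ hne K hK k1 hk1 z hz γ hγ μ hμ hrat
end
end

section
/- (Theorem 1) Let Assumptions 1 and 2 hold and suppose P > 0. Let the positive parameters δ, γ^1,…,γ^m, μ satisfy β := min_{x ∈ 𝕏∖B_δ} α_b^0(x) > 0 and β·(L^0(x, Kx) + F^0(f(x, Kx)) − F^0(x)) ≤ −(1 − β)·P for all x ∈ 𝕏∖B_δ, where K satisfies Assumption 2 for δ. Fix the horizon N ≥ 2, let x_k ∈ 𝕏∖B_δ, set the weight vector α := α_b(x_k), and let U_* be a feasible multi-horizon input at x_k that minimizes α⊤𝐉(x_k, ·) over all feasible multi-horizon inputs, whose primary final state x_{k,f} lies in 𝕏∖B_δ. Let u*_k be the first input of U_*, x_{k+1} := f(x_k, u*_k), and let U_s(x_{k+1}) be the shifted candidate built from U_* with K and û. Then α⊤𝐉(x_{k+1}, U_s(x_{k+1})) ≤ α⊤𝐉(x_k,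 U_*). -/
noncomputable section

/-- The state trajectory of `x_{j+1} = f(x_j, u_j)` from `x` under input sequence `u`. -/
def traj {E U : Type*} (f : E → U → E) (x : E) (u : ℕ → U) : ℕ → E
  | 0 => x
  | j + 1 => f (traj f x u j) (u j)

/-- Horizon-`N` cost `Jⁱ(x,(v_j)) = Σ_{j<N} L(x_j,v_j) + F(x_N)` of an input sequence. -/
def Jcost {E U : Type*} (f : E → U → E) (L : E → U → ℝ) (F : E → ℝ) (N : ℕ)
    (x : E) (v : ℕ → U) : ℝ :=
  (∑ j ∈ Finset.range N, L (traj f x v j) (v j)) + F (traj f x v N)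

/-- Weighted multi-horizon cost `α⊤𝐉(x,U)`: component `0` is `J⁰(x,U⁰)`, component `i ≥ 1`
is the average `(1/(N−1)) Σ_{p=0}^{N−2} Jⁱ(x,U_pⁱ)`.  `Up` is the primary horizon, and
`Ua i p` is the sub-horizon `U_pⁱ` toward alternative destination `i+1`. -/
def wcost {E U : Type*} {m : ℕ} (f : E → U → E) (L : Fin (m + 1) → E → U → ℝ)
    (F : Fin (m + 1) → E → ℝ) (N : ℕ) (α : Fin (m + 1) → ℝ)
    (x : E) (Up : ℕ → U) (Ua : Fin m → ℕ → ℕ → U) : ℝ :=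
  α 0 * Jcost f (L 0) (F 0) N x Up +
    ∑ i : Fin m, α i.succ *
      (((N : ℝ) - 1)⁻¹ *
        ∑ p ∈ Finset.range (N - 1), Jcost f (L i.succ) (F i.succ) N x (Ua i p))

/-- Feasibility of a multi-horizon input at `x`: all inputs lie in `𝕌`, all trajectory
states lie in `𝕏`, and each sub-horizon `U_pⁱ` shares its first `p+1` inputs with `U⁰`. -/
def Feas {E U : Type*} {m : ℕ} (f : E → U → E) (Xs : Set E) (Us : Set U) (N : ℕ)
    (x : E) (Up : ℕ → U) (Ua : Fin m → ℕ → ℕ → U) : Prop :=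
  (∀ j < N, Up j ∈ Us) ∧ (∀ j ≤ N, traj f x Up j ∈ Xs) ∧
  (∀ i : Fin m, ∀ p < N - 1,
    (∀ j < N, Ua i p j ∈ Us) ∧ (∀ j ≤ N, traj f x (Ua i p) j ∈ Xs)) ∧
  (∀ i : Fin m, ∀ p < N - 1, ∀ j ≤ p, Ua i p j = Up j)

/-- `U_*` is a feasible multi-horizon input minimizing `α⊤𝐉(x,·)` over feasible inputs. -/
def IsMinimizer {E U : Type*} {m : ℕ} (f : E → U → E) (L : Fin (m + 1) → E → U → ℝ)
    (F : Fin (m + 1) → E → ℝ) (Xs : Set E) (Us : Set U) (N : ℕ) (α : Fin (m + 1) → ℝ)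
    (x : E) (Up : ℕ → U) (Ua : Fin m → ℕ → ℕ → U) : Prop :=
  Feas f Xs Us N x Up Ua ∧
    ∀ Vp Va, Feas f Xs Us N x Vp Va →
      wcost f L F N α x Up Ua ≤ wcost f L F N α x Vp Va

/-- Shift of a horizon: drop the first input and append `last` at the end. -/
def shiftP {U : Type*} (N : ℕ) (Up : ℕ → U) (last : U) : ℕ → U :=
  fun j => if j < N - 1 then Up (j + 1) else last

/-- Shift of all alternative sub-horizons: drop their first input and append `uhat`. -/
def shiftA {U : Type*} {m : ℕ} (N : ℕ) (Ua : Fin m → ℕ → ℕ → U) (uhat : U) :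
    Fin m → ℕ → ℕ → U :=
  fun i p j => if j < N - 1 then Ua i p (j + 1) else uhat

/-- The baseline weight vector `α_b(x)`: `α_b⁰(x) = 1 − Σ_i γ^i‖x‖/max(μ,‖x−pⁱ‖)` and
`α_bⁱ(x) = γ^i‖x‖/max(μ,‖x−pⁱ‖)` for `i = 1,…,m`. -/
def baseWeight {nx m : ℕ} (γ : Fin m → ℝ) (μ : ℝ)
    (p : Fin (m + 1) → EuclideanSpace ℝ (Fin nx)) (x : EuclideanSpace ℝ (Fin nx)) :
    Fin (m + 1) → ℝ :=
  Fin.cons (1 - ∑ i : Fin m, γ i * ‖x‖ / max μ ‖x - p i.succ‖)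
    (fun i => γ i * ‖x‖ / max μ ‖x - p i.succ‖)

/-!
Shifting a feasible horizon by one step drops its first stage cost, which is nonnegative by
Assumption 1, and appends one step at its final state. On the primary horizon the appended
input is `K x_f`, which changes the cost by `T := L⁰(x_f,Kx_f) + F⁰(f(x_f,Kx_f)) − F⁰(x_f) ≤ 0`;
on every alternative sub-horizon it is `û`, which changes the cost by at most `P`. Since the
weights are nonnegative and sum to one, the weighted cost grows by at most
`α⁰ T + (1 − α⁰) P`. This is affine in `α⁰ ∈ [β, 1]`, nonpositive at `α⁰ = β` by the key
inequality and at `α⁰ = 1` because `T ≤ 0`, hence nonpositive.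
-/

open Finset

section Shift

variable {E U : Type*} (f : E → U → E)

theorem traj_shiftP {N : ℕ} (x : E) (v : ℕ → U) (last : U) :
    ∀ j ≤ N - 1, traj f (f x (v 0)) (shiftP N v last) j = traj f x v (j + 1)
  | 0, _ => rfl
  | j + 1, hj => by
    rw [traj, traj_shiftP x v last j (by omega), shiftP, if_pos (by omega)]
    rfl

theorem Jcost_shiftP (L : E → U → ℝ) (F : E → ℝ) {N : ℕ} (hN : 0 < N) (x : E) (v : ℕ → U)
    (last : U) :
    Jcost f L F N (f x (v 0)) (shiftP N v last) =
      Jcost f L F N x v - L x (v 0) +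
        (L (traj f x v N) last + F (f (traj f x v N) last) - F (traj f x v N)) := by
  obtain ⟨n, rfl⟩ : ∃ n, N = n + 1 := ⟨N - 1, by omega⟩
  have htraj : ∀ j ≤ n, traj f (f x (v 0)) (shiftP (n + 1) v last) j = traj f x v (j + 1) :=
    fun j hj => traj_shiftP f x v last j (by omega)
  have hlast : shiftP (n + 1) v last n = last := if_neg (by omega)
  have hend : traj f (f x (v 0)) (shiftP (n + 1) v last) (n + 1) =
      f (traj f x v (n + 1)) last := by
    rw [traj, htraj n le_rfl, hlast]
  have hbody : ∀ j ∈ range n,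
      L (traj f (f x (v 0)) (shiftP (n + 1) v last) j) (shiftP (n + 1) v last j) =
        L (traj f x v (j + 1)) (v (j + 1)) := by
    intro j hj
    have hj : j < n := mem_range.1 hj
    rw [htraj j hj.le, shiftP, if_pos (by omega)]
  rw [Jcost, Jcost, hend, sum_range_succ, sum_congr rfl hbody, htraj n le_rfl, hlast,
    sum_range_succ' (fun j => L (traj f x v j) (v j)) n]
  simp only [traj]
  ring

theorem Jcost_shiftP_le {L : E → U → ℝ} {F : E → ℝ} {N : ℕ} (hN : 0 < N) {x : E}
    {v : ℕ → U} {last : U} {c : ℝ} (hL : 0 ≤ L x (v 0))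
    (hstep : L (traj f x v N) last + F (f (traj f x v N) last) - F (traj f x v N) ≤ c) :
    Jcost f L F N (f x (v 0)) (shiftP N v last) ≤ Jcost f L F N x v + c := by
  rw [Jcost_shiftP f L F hN]
  linarith

end Shift

theorem inv_mul_sum_range_le_add {n : ℕ} (hn : 0 < n) {a b : ℕ → ℝ} {c : ℝ}
    (h : ∀ q < n, a q ≤ b q + c) :
    (n : ℝ)⁻¹ * ∑ q ∈ range n, a q ≤ (n : ℝ)⁻¹ * ∑ q ∈ range n, b q + c := by
  have hsum : ∑ q ∈ range n, a q ≤ ∑ q ∈ range n, b q + n * c :=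
    calc ∑ q ∈ range n, a q ≤ ∑ q ∈ range n, (b q + c) :=
          sum_le_sum fun q hq => h q (mem_range.1 hq)
      _ = ∑ q ∈ range n, b q + n * c := by
          rw [sum_add_distrib, sum_const, card_range, nsmul_eq_mul]
  have hn' : (0 : ℝ) < n := Nat.cast_pos.2 hn
  calc (n : ℝ)⁻¹ * ∑ q ∈ range n, a q ≤ (n : ℝ)⁻¹ * (∑ q ∈ range n, b q + n * c) :=
        mul_le_mul_of_nonneg_left hsum (inv_nonneg.2 hn'.le)
    _ = (n : ℝ)⁻¹ * ∑ q ∈ range n, b q + c := by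
        field_simp

theorem wcost_le_add {E U : Type*} {m : ℕ} {f : E → U → E} {L : Fin (m + 1) → E → U → ℝ}
    {F : Fin (m + 1) → E → ℝ} {N : ℕ} (hN : 1 < N) {α : Fin (m + 1) → ℝ}
    (hα₀ : 0 ≤ α 0) (hα : ∀ i : Fin m, 0 ≤ α i.succ) {x x' : E} {Up Vp : ℕ → U}
    {Ua Va : Fin m → ℕ → ℕ → U} {T c : ℝ}
    (hprim : Jcost f (L 0) (F 0) N x' Vp ≤ Jcost f (L 0) (F 0) N x Up + T)
    (halt : ∀ i : Fin m, ∀ q < N - 1,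
      Jcost f (L i.succ) (F i.succ) N x' (Va i q) ≤
        Jcost f (L i.succ) (F i.succ) N x (Ua i q) + c) :
    wcost f L F N α x' Vp Va ≤
      wcost f L F N α x Up Ua + (α 0 * T + (∑ i : Fin m, α i.succ) * c) := by
  have hcast : (N : ℝ) - 1 = ((N - 1 : ℕ) : ℝ) := by
    rw [Nat.cast_sub hN.le, Nat.cast_one]
  have havg : ∀ i : Fin m,
      α i.succ * (((N : ℝ) - 1)⁻¹ *
          ∑ q ∈ range (N - 1), Jcost f (L i.succ) (F i.succ) N x' (Va i q)) ≤
        α i.succ * (((N : ℝ) - 1)⁻¹ *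
          ∑ q ∈ range (N - 1), Jcost f (L i.succ) (F i.succ) N x (Ua i q)) + α i.succ * c := by
    intro i
    rw [hcast, ← mul_add]
    exact mul_le_mul_of_nonneg_left (inv_mul_sum_range_le_add (by omega) (halt i)) (hα i)
  have hsum := sum_le_sum fun i (_ : i ∈ univ) => havg i
  rw [sum_add_distrib, ← sum_mul] at hsum
  have h₀ := mul_le_mul_of_nonneg_left hprim hα₀
  rw [mul_add] at h₀
  simp only [wcost]
  linarith

theorem baseWeight_succ_nonneg {nx m : ℕ} {γ : Fin m → ℝ} (hγ : ∀ i, 0 ≤ γ i) (μ : ℝ)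
    (p : Fin (m + 1) → EuclideanSpace ℝ (Fin nx)) (x : EuclideanSpace ℝ (Fin nx)) (i : Fin m) :
    0 ≤ baseWeight γ μ p x i.succ := by
  rw [baseWeight, Fin.cons_succ]
  exact div_nonneg (mul_nonneg (hγ i) (norm_nonneg _)) (le_max_of_le_right (norm_nonneg _))

theorem sum_baseWeight_succ {nx m : ℕ} (γ : Fin m → ℝ) (μ : ℝ)
    (p : Fin (m + 1) → EuclideanSpace ℝ (Fin nx)) (x : EuclideanSpace ℝ (Fin nx)) :
    ∑ i : Fin m, baseWeight γ μ p x i.succ = 1 - baseWeight γ μ p x 0 := by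
  simp only [baseWeight, Fin.cons_zero, Fin.cons_succ]
  ring

theorem ClassK.nonneg {σ : ℝ → ℝ} (h : ClassK σ) {t : ℝ} (ht : 0 ≤ t) : 0 ≤ σ t :=
  h.2.2 ▸ h.2.1.monotoneOn Set.self_mem_Ici ht ht

theorem mul_add_one_sub_mul_nonpos_of_le {a b T P : ℝ} (hba : b ≤ a) (ha : a ≤ 1) (hT : T ≤ 0)
    (hb : b * T + (1 - b) * P ≤ 0) : a * T + (1 - a) * P ≤ 0 := by
  rcases (hba.trans ha).eq_or_lt with rfl | hb1
  · obtain rfl : a = 1 := le_antisymm ha hba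
    linarith
  · have key : (1 - b) * (a * T + (1 - a) * P) =
        (1 - a) * (b * T + (1 - b) * P) + (a - b) * T := by
      ring
    refine nonpos_of_mul_nonpos_right ?_ (sub_pos.2 hb1)
    rw [key]
    exact add_nonpos (mul_nonpos_of_nonneg_of_nonpos (sub_nonneg.2 ha) hb)
      (mul_nonpos_of_nonneg_of_nonpos (sub_nonneg.2 hba) hT)

theorem stmt_6_general {nx nu m : ℕ}
    (f : EuclideanSpace ℝ (Fin nx) → EuclideanSpace ℝ (Fin nu) → EuclideanSpace ℝ (Fin nx))
    (Xs : Set (EuclideanSpace ℝ (Fin nx)))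
    (Us : Set (EuclideanSpace ℝ (Fin nu)))
    (p : Fin (m + 1) → EuclideanSpace ℝ (Fin nx))
    (L : Fin (m + 1) → EuclideanSpace ℝ (Fin nx) → EuclideanSpace ℝ (Fin nu) → ℝ)
    (F : Fin (m + 1) → EuclideanSpace ℝ (Fin nx) → ℝ)
    -- Assumption 1
    (σ1 : ℝ → ℝ) (hσ1 : ClassK σ1)
    (hL_lb : ∀ i, ∀ x ∈ Xs, ∀ u ∈ Us, σ1 ‖x - p i‖ ≤ L i x u)
    -- P = min-max constant, attained at û, with P > 0
    (P : ℝ) (uhat : EuclideanSpace ℝ (Fin nu))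
    (huhat : uhat ∈ Us ∧ IsGreatest
        ((fun q : Fin (m + 1) × EuclideanSpace ℝ (Fin nx) =>
            L q.1 q.2 uhat + F q.1 (f q.2 uhat) - F q.1 q.2) ''
          ((Set.univ : Set (Fin (m + 1))) ×ˢ Xs)) P)
    -- parameters δ, γ, μ and the matrix K satisfying Assumption 2 for δ
    (δ : ℝ) (γ : Fin m → ℝ) (hγ : ∀ i, 0 < γ i) (μ : ℝ)
    (K : Matrix (Fin nu) (Fin nx) ℝ)
    (hK : ∀ x ∈ Xs \ Metric.ball 0 δ,
      L 0 x (matVec K x) + F 0 (f x (matVec K x)) - F 0 x < 0)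
    -- β = min of the primary baseline weight over 𝕏∖B_δ, β > 0, and the key inequality
    (β : ℝ)
    (hβ : IsLeast ((fun x => baseWeight γ μ p x 0) '' (Xs \ Metric.ball 0 δ)) β)
    (hβpos : 0 < β)
    (hkey : ∀ x ∈ Xs \ Metric.ball 0 δ,
      β * (L 0 x (matVec K x) + F 0 (f x (matVec K x)) - F 0 x) ≤ -(1 - β) * P)
    -- horizon, current state, and the optimizer U_*
    (N : ℕ) (hN : 2 ≤ N)
    (xk : EuclideanSpace ℝ (Fin nx)) (hxk : xk ∈ Xs \ Metric.ball 0 δ)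
    (Up : ℕ → EuclideanSpace ℝ (Fin nu))
    (Ua : Fin m → ℕ → ℕ → EuclideanSpace ℝ (Fin nu))
    (hopt : IsMinimizer f L F Xs Us N (baseWeight γ μ p xk) xk Up Ua)
    (hxkf : traj f xk Up N ∈ Xs \ Metric.ball 0 δ) :
    wcost f L F N (baseWeight γ μ p xk) (f xk (Up 0))
        (shiftP N Up (matVec K (traj f xk Up N))) (shiftA N Ua uhat)
      ≤ wcost f L F N (baseWeight γ μ p xk) xk Up Ua := by
  obtain ⟨⟨hUp, -, hUa, hshare⟩, -⟩ := hopt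
  set α := baseWeight γ μ p xk
  set xf := traj f xk Up N
  have hα : ∀ i : Fin m, 0 ≤ α i.succ := baseWeight_succ_nonneg (fun i => (hγ i).le) μ p xk
  have hβα : β ≤ α 0 := hβ.2 ⟨xk, hxk, rfl⟩
  have hα_sum : ∑ i : Fin m, α i.succ = 1 - α 0 := sum_baseWeight_succ γ μ p xk
  have hα₀ : α 0 ≤ 1 := by linarith [sum_nonneg fun i (_ : i ∈ univ) => hα i]
  have hLxk : ∀ i, ∀ u ∈ Us, 0 ≤ L i xk u := fun i u hu =>
    (hσ1.nonneg (norm_nonneg _)).trans (hL_lb i xk hxk.1 u hu)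
  have hprim : Jcost f (L 0) (F 0) N (f xk (Up 0)) (shiftP N Up (matVec K xf)) ≤
      Jcost f (L 0) (F 0) N xk Up +
        (L 0 xf (matVec K xf) + F 0 (f xf (matVec K xf)) - F 0 xf) :=
    Jcost_shiftP_le f (by omega) (hLxk 0 _ (hUp 0 (by omega))) le_rfl
  have halt : ∀ i : Fin m, ∀ q < N - 1,
      Jcost f (L i.succ) (F i.succ) N (f xk (Up 0)) (shiftA N Ua uhat i q) ≤
        Jcost f (L i.succ) (F i.succ) N xk (Ua i q) + P := by
    intro i q hq
    rw [← hshare i q hq 0 (Nat.zero_le q)]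
    exact Jcost_shiftP_le f (by omega) (hLxk _ _ ((hUa i q hq).1 0 (by omega)))
      (huhat.2.2 ⟨(i.succ, _), ⟨trivial, (hUa i q hq).2 N le_rfl⟩, rfl⟩)
  have hdec := mul_add_one_sub_mul_nonpos_of_le (P := P) hβα hα₀ (hK xf hxkf).le
    (by linarith [hkey xf hxkf])
  calc _ ≤ _ := wcost_le_add (by omega) (hβpos.le.trans hβα) hα hprim halt
    _ ≤ wcost f L F N α xk Up Ua := by
      rw [hα_sum]
      linarith

/-- Theorem 1: under Assumptions 1 and 2 with `P > 0`, with parameters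
`δ, γ, μ` satisfying `β := min_{x∈𝕏∖B_δ} α_b⁰(x) > 0` and
`β·(L⁰(x,Kx)+F⁰(f(x,Kx))−F⁰(x)) ≤ −(1−β)·P` on `𝕏∖B_δ` (`K` from Assumption 2 for `δ`),
for `x_k ∈ 𝕏∖B_δ`, `α := α_b(x_k)`, and `U_*` a feasible minimizer of `α⊤𝐉(x_k,·)` whose
primary final state lies in `𝕏∖B_δ`, the shifted candidate `U_s(x_{k+1})` built with `K`
and `û` satisfies `α⊤𝐉(x_{k+1}, U_s(x_{k+1})) ≤ α⊤𝐉(x_k, U_*)`, where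
`x_{k+1} = f(x_k, u*_k)`. -/
theorem stmt_6 {nx nu m : ℕ}
    (f : EuclideanSpace ℝ (Fin nx) → EuclideanSpace ℝ (Fin nu) → EuclideanSpace ℝ (Fin nx))
    (hf : Continuous fun q : EuclideanSpace ℝ (Fin nx) × EuclideanSpace ℝ (Fin nu) =>
      f q.1 q.2)
    (Xs : Set (EuclideanSpace ℝ (Fin nx))) (hXc : IsCompact Xs)
    (Us : Set (EuclideanSpace ℝ (Fin nu))) (hUc : IsCompact Us)
    (p : Fin (m + 1) → EuclideanSpace ℝ (Fin nx)) (hp0 : p 0 = 0)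
    (L : Fin (m + 1) → EuclideanSpace ℝ (Fin nx) → EuclideanSpace ℝ (Fin nu) → ℝ)
    (F : Fin (m + 1) → EuclideanSpace ℝ (Fin nx) → ℝ)
    -- Assumption 1
    (hLc : ∀ i, Continuous fun q :
      EuclideanSpace ℝ (Fin nx) × EuclideanSpace ℝ (Fin nu) => L i q.1 q.2)
    (hFc : ∀ i, Continuous (F i))
    (hLp : ∀ i, L i (p i) 0 = 0) (hFp : ∀ i, F i (p i) = 0)
    (σ1 σ2 : ℝ → ℝ) (hσ1 : ClassK σ1) (hσ2 : ClassK σ2)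
    (hL_lb : ∀ i, ∀ x ∈ Xs, ∀ u ∈ Us, σ1 ‖x - p i‖ ≤ L i x u)
    (hF_lb : ∀ i, ∀ x ∈ Xs, σ1 ‖x - p i‖ ≤ F i x)
    (hF_ub : ∀ i, ∀ x ∈ Xs, F i x ≤ σ2 ‖x - p i‖)
    -- Assumption 2 (global form)
    (hA2 : ∀ δ' > (0 : ℝ), Metric.ball (0 : EuclideanSpace ℝ (Fin nx)) δ' ⊆ Xs →
      ∃ K' : Matrix (Fin nu) (Fin nx) ℝ, ∀ x ∈ Xs \ Metric.ball 0 δ',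
        L 0 x (matVec K' x) + F 0 (f x (matVec K' x)) - F 0 x < 0)
    -- P = min-max constant, attained at û, with P > 0
    (P : ℝ) (uhat : EuclideanSpace ℝ (Fin nu))
    (hP : IsLeast {y : ℝ | ∃ u ∈ Us, IsGreatest
        ((fun q : Fin (m + 1) × EuclideanSpace ℝ (Fin nx) =>
            L q.1 q.2 u + F q.1 (f q.2 u) - F q.1 q.2) ''
          ((Set.univ : Set (Fin (m + 1))) ×ˢ Xs)) y} P)
    (huhat : uhat ∈ Us ∧ IsGreatest
        ((fun q : Fin (m + 1) × EuclideanSpace ℝ (Fin nx) =>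
            L q.1 q.2 uhat + F q.1 (f q.2 uhat) - F q.1 q.2) ''
          ((Set.univ : Set (Fin (m + 1))) ×ˢ Xs)) P)
    (hPpos : 0 < P)
    -- parameters δ, γ, μ and the matrix K satisfying Assumption 2 for δ
    (δ : ℝ) (hδ : 0 < δ) (γ : Fin m → ℝ) (hγ : ∀ i, 0 < γ i) (μ : ℝ) (hμ : 0 < μ)
    (hball : Metric.ball (0 : EuclideanSpace ℝ (Fin nx)) δ ⊆ Xs)
    (K : Matrix (Fin nu) (Fin nx) ℝ)
    (hK : ∀ x ∈ Xs \ Metric.ball 0 δ,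
      L 0 x (matVec K x) + F 0 (f x (matVec K x)) - F 0 x < 0)
    -- β = min of the primary baseline weight over 𝕏∖B_δ, β > 0, and the key inequality
    (β : ℝ)
    (hβ : IsLeast ((fun x => baseWeight γ μ p x 0) '' (Xs \ Metric.ball 0 δ)) β)
    (hβpos : 0 < β)
    (hkey : ∀ x ∈ Xs \ Metric.ball 0 δ,
      β * (L 0 x (matVec K x) + F 0 (f x (matVec K x)) - F 0 x) ≤ -(1 - β) * P)
    -- horizon, current state, and the optimizer U_*
    (N : ℕ) (hN : 2 ≤ N)
    (xk : EuclideanSpace ℝ (Fin nx)) (hxk : xk ∈ Xs \ Metric.ball 0 δ)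
    (Up : ℕ → EuclideanSpace ℝ (Fin nu))
    (Ua : Fin m → ℕ → ℕ → EuclideanSpace ℝ (Fin nu))
    (hopt : IsMinimizer f L F Xs Us N (baseWeight γ μ p xk) xk Up Ua)
    (hxkf : traj f xk Up N ∈ Xs \ Metric.ball 0 δ) :
    wcost f L F N (baseWeight γ μ p xk) (f xk (Up 0))
        (shiftP N Up (matVec K (traj f xk Up N))) (shiftA N Ua uhat)
      ≤ wcost f L F N (baseWeight γ μ p xk) xk Up Ua :=
  stmt_6_general f Xs Us p L F σ1 hσ1 hL_lb P uhat huhat δ γ hγ μ K hK β hβ hβpos hkey N hN xk hxk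
    Up Ua hopt hxkf
end
end
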